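/- The Teia potential update condition holds for a lazy request served by a matched server: let (M,d) be a metric space, k ≥ 2, let s_1,…,s_k and a_1,…,a_k be points of M with s_j = a_j for every j ≠ 1, and let E_1,…,E_k ∈ ℝ. Suppose the request is r = a_1 and E_2 + d(s_2, a_1) ≤ E_1 + d(s_1, a_1), so server 2 serves the request. Define the new configuration obtained by moving server 2 to a_1 and re-matching: ŝ_1 = s_1, â_1 = s_2, ŝ_2 = â_2 = a_1, and ŝ_j = â_j = s_j for all j ≥ 3; define the new handicaps Ê_j := E_j + α(a_1; s_2, s_j) for all j, where α(p;q,r) := (d(p,q)+d(p,r)−d(q,r))/2 (note Ê_2 = E_2 + d(s_2,a_1)). Then Φ(ŝ,â,Ê) − Φ(s,a,E) + d(s_2,a_1) ≤ 0. -/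

import Mathlib

/-!
Only server 2 moves, and the matching is concentrated on the single pair `(s₁, a₁)` before and
`(s₁, s₂)` after, so every term of `Φ` can be computed. Because `α(a₁; s₂, x) - α(s₁; s₂, x)`
equals `α(a₁; s₂, s₁) - α(s₁; a₁, x)`, every new `eⱼ` with `j ≠ 2` is the old one plus
`α(a₁; s₂, s₁)`, and the serving inequality bounds the new `e₂` by the old `e₁` plus the same
amount; so `k·e_max` grows by at most `k·α(a₁; s₂, s₁)`, which exactly cancels the change
`k·(d(s₁,s₂) - d(s₁,a₁))` of the matching term. What remains, the change of the pairwise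
distances minus twice the total handicap increase, telescopes to `-d(s₂, a₁)`.
-/

/-- The isolation index `α(p; q, r) = (d(p,q) + d(p,r) − d(q,r)) / 2`. -/
noncomputable def alpha {M : Type*} [MetricSpace M] (p q r : M) : ℝ :=
  (dist p q + dist p r - dist q r) / 2

/-- The Teia potential `Φ(s, a, E)`:
`Σ_{i<j} d(s_i,s_j) + k·Σ_i d(s_i,a_i) + 2·Σ_i (e_max − E_i)`,
where `ε^i = Σ_j α(s_j; a_j, s_i)`, `e_i = E_i − ε^i`, and
`e_max = max_i e_i`. -/
noncomputable def teiaPhi {M : Type*} [MetricSpace M] {k : ℕ}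
    (s a : Fin k → M) (E : Fin k → ℝ) : ℝ :=
  (∑ i : Fin k, ∑ j ∈ Finset.Ioi i, dist (s i) (s j))
    + k * ∑ i : Fin k, dist (s i) (a i)
    + 2 * ∑ i : Fin k,
        ((⨆ j : Fin k, (E j - ∑ l : Fin k, alpha (s l) (a l) (s j))) - E i)

open Finset Function

section Alpha

variable {M : Type*} [MetricSpace M]

lemma alpha_self_left (p x : M) : alpha p p x = 0 := by
  simp [alpha]

lemma alpha_sub_alpha (p q r x : M) :
    alpha r q x - alpha p q x = alpha r q p - alpha p r x := by
  simp only [alpha, dist_comm r p, dist_comm q p]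
  ring

lemma sum_alpha {ι : Type*} [Fintype ι] (p q : M) (s : ι → M) :
    ∑ i, alpha p q (s i)
      = (Fintype.card ι * dist p q + ∑ i, dist p (s i) - ∑ i, dist q (s i)) / 2 := by
  simp only [alpha, ← sum_div, sum_sub_distrib, sum_add_distrib, sum_const, card_univ,
    nsmul_eq_mul]

end Alpha

section Sums

variable {ι α β : Type*}

lemma Fintype.sum_apply_update [Fintype ι] [DecidableEq ι] [AddCommGroup β] (g : α → β) (s : ι → α)
    (i : ι) (x : α) : ∑ j, g (update s i x j) = ∑ j, g (s j) + g x - g (s i) := by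
  have := sum_update_of_mem (mem_univ i) (g ∘ s) (g x)
  rw [← comp_update] at this
  simp only [comp_apply] at this
  rw [this, sdiff_singleton_eq_erase, sum_erase_eq_sub (mem_univ i)]
  abel

lemma Fintype.sum_apply_eq_single_of_eq_off [Fintype ι] [AddCommMonoid β] {f : α → α → β}
    (hf : ∀ x, f x x = 0) {s a : ι → α} (i : ι) (h : ∀ j ≠ i, s j = a j) :
    ∑ j, f (s j) (a j) = f (s i) (a i) :=
  Fintype.sum_eq_single i fun j hj => by rw [h j hj, hf]

lemma update_eq_update_update_of_ne [DecidableEq ι] {s a : ι → α} {i₀ : ι}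
    (h : ∀ j, j ≠ i₀ → s j = a j) (i₁ j : ι) (hj : j ≠ i₀) :
    update s i₁ (a i₀) j = update (update a i₀ (s i₁)) i₁ (a i₀) j := by
  by_cases hj₁ : j = i₁
  · simp [hj₁]
  · simp [hj₁, hj, h j hj]

end Sums

section PairSums

variable {ι M : Type*} [Fintype ι] [MetricSpace M]

lemma sum_sum_Ioi_dist [LinearOrder ι] [LocallyFiniteOrderTop ι] [LocallyFiniteOrderBot ι]
    (s : ι → M) :
    ∑ i, ∑ j ∈ Ioi i, dist (s i) (s j) = (∑ i, ∑ j, dist (s i) (s j)) / 2 := by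
  have hoff := sum_sum_Ioi_add_eq_sum_sum_off_diag fun i j => dist (s i) (s j)
  have hdiag (i : ι) : ∑ j ∈ {i}ᶜ, dist (s j) (s i) = ∑ j, dist (s i) (s j) := by
    rw [← sum_add_sum_compl {i}, sum_singleton, dist_self, zero_add]
    simp only [dist_comm]
  have hswap : ∑ i, ∑ j ∈ Ioi i, dist (s j) (s i) = ∑ i, ∑ j ∈ Ioi i, dist (s i) (s j) :=
    sum_congr rfl fun i _ => sum_congr rfl fun j _ => dist_comm _ _
  rw [sum_congr rfl fun i _ => hdiag i, sum_congr rfl fun i _ => sum_add_distrib,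
    sum_add_distrib, hswap] at hoff
  linarith

lemma sum_sum_dist_update [DecidableEq ι] (s : ι → M) (i : ι) (x : M) :
    ∑ j, ∑ l, dist (update s i x j) (update s i x l)
      = ∑ j, ∑ l, dist (s j) (s l) + 2 * ∑ l, dist x (s l) - 2 * ∑ l, dist (s i) (s l)
        - 2 * dist x (s i) := by
  have hrow (y : M) :
      ∑ l, dist y (update s i x l) = ∑ l, dist y (s l) + dist y x - dist y (s i) :=
    Fintype.sum_apply_update (dist y) s i x
  have hcol (y : M) : ∑ j, dist (s j) y = ∑ j, dist y (s j) :=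
    sum_congr rfl fun j _ => dist_comm _ _
  simp only [hrow, sum_add_distrib, sum_sub_distrib,
    Fintype.sum_apply_update (fun y => ∑ l, dist y (s l)),
    Fintype.sum_apply_update (fun y => dist y x), Fintype.sum_apply_update (fun y => dist y (s i)),
    hcol, dist_self, dist_comm (s i) x]
  ring

end PairSums

section Teia

variable {M : Type*} [MetricSpace M] {k : ℕ}

noncomputable def teiaEMax (s a : Fin k → M) (E : Fin k → ℝ) : ℝ :=
  ⨆ j, (E j - ∑ l, alpha (s l) (a l) (s j))

lemma teiaPhi_eq (s a : Fin k → M) (E : Fin k → ℝ) :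
    teiaPhi s a E = ∑ i, ∑ j ∈ Ioi i, dist (s i) (s j) + k * ∑ i, dist (s i) (a i)
      + 2 * (k * teiaEMax s a E - ∑ i, E i) := by
  simp only [teiaPhi, teiaEMax, sum_sub_distrib, sum_const, card_univ, Fintype.card_fin,
    nsmul_eq_mul]

variable {i₀ i₁ : Fin k} {s a : Fin k → M} {E : Fin k → ℝ}

lemma teiaEMax_lazy_le (hne : i₁ ≠ i₀) (h : ∀ j, j ≠ i₀ → s j = a j)
    (hserve : E i₁ + dist (s i₁) (a i₀) ≤ E i₀ + dist (s i₀) (a i₀)) :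
    teiaEMax (update s i₁ (a i₀)) (update (update a i₀ (s i₁)) i₁ (a i₀))
        (fun j => E j + alpha (a i₀) (s i₁) (s j))
      ≤ teiaEMax s a E + alpha (a i₀) (s i₁) (s i₀) := by
  set r := a i₀
  have heps (y : M) : ∑ l, alpha (s l) (a l) y = alpha (s i₀) r y :=
    Fintype.sum_apply_eq_single_of_eq_off (f := fun p q => alpha p q y) (alpha_self_left · y) i₀ h
  have heps' (y : M) : ∑ l, alpha (update s i₁ r l) (update (update a i₀ (s i₁)) i₁ r l) y
      = alpha (s i₀) (s i₁) y := by
    rw [Fintype.sum_apply_eq_single_of_eq_off (f := fun p q => alpha p q y) (alpha_self_left · y)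
      i₀ (update_eq_update_update_of_ne h i₁)]
    simp [hne.symm]
  have hbdd : BddAbove (Set.range fun j => E j - ∑ l, alpha (s l) (a l) (s j)) :=
    (Set.finite_range _).bddAbove
  have hle (j : Fin k) : E j - alpha (s i₀) r (s j) ≤ teiaEMax s a E := by
    rw [← heps]
    exact le_ciSup hbdd j
  have : Nonempty (Fin k) := ⟨i₀⟩
  refine ciSup_le fun j => ?_
  simp only [heps']
  by_cases hj : j = i₁
  · subst hj
    calc E j + alpha r (s j) (s j) - alpha (s i₀) (s j) (update s j r j)
        ≤ E i₀ - alpha (s i₀) r (s i₀) + alpha r (s j) (s i₀) := by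
          simp only [update_self, alpha, dist_self, dist_comm r (s j), dist_comm r (s i₀),
            dist_comm (s j) (s i₀)] at hserve ⊢
          linarith
      _ ≤ teiaEMax s a E + alpha r (s j) (s i₀) := by
          linarith [hle i₀]
  · calc E j + alpha r (s i₁) (s j) - alpha (s i₀) (s i₁) (update s i₁ r j)
        = E j - alpha (s i₀) r (s j) + alpha r (s i₁) (s i₀) := by
          rw [update_of_ne hj]
          linarith [alpha_sub_alpha (s i₀) (s i₁) r (s j)]
      _ ≤ teiaEMax s a E + alpha r (s i₁) (s i₀) := by
          linarith [hle j]

lemma teiaPhi_lazy_sub_add_dist_nonpos (hne : i₁ ≠ i₀) (h : ∀ j, j ≠ i₀ → s j = a j)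
    (hserve : E i₁ + dist (s i₁) (a i₀) ≤ E i₀ + dist (s i₀) (a i₀)) :
    teiaPhi (update s i₁ (a i₀)) (update (update a i₀ (s i₁)) i₁ (a i₀))
        (fun j => E j + alpha (a i₀) (s i₁) (s j))
      - teiaPhi s a E + dist (s i₁) (a i₀) ≤ 0 := by
  have hmax := mul_le_mul_of_nonneg_left (teiaEMax_lazy_le hne h hserve) k.cast_nonneg
  set r := a i₀
  have hpair : ∑ i, ∑ j ∈ Ioi i, dist (update s i₁ r i) (update s i₁ r j)
      = ∑ i, ∑ j ∈ Ioi i, dist (s i) (s j) + ∑ l, dist r (s l) - ∑ l, dist (s i₁) (s l)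
        - dist r (s i₁) := by
    rw [sum_sum_Ioi_dist, sum_sum_Ioi_dist, sum_sum_dist_update]
    ring
  have hcost : ∑ i, dist (s i) (a i) = dist (s i₀) r :=
    Fintype.sum_apply_eq_single_of_eq_off dist_self i₀ h
  have hcost' : ∑ i, dist (update s i₁ r i) (update (update a i₀ (s i₁)) i₁ r i)
      = dist (s i₀) (s i₁) := by
    rw [Fintype.sum_apply_eq_single_of_eq_off dist_self i₀ (update_eq_update_update_of_ne h i₁)]
    simp [hne.symm]
  have hE : ∑ j, (E j + alpha r (s i₁) (s j)) = ∑ j, E j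
      + (k * dist r (s i₁) + ∑ l, dist r (s l) - ∑ l, dist (s i₁) (s l)) / 2 := by
    rw [sum_add_distrib, sum_alpha, Fintype.card_fin]
  have hα :
      alpha r (s i₁) (s i₀) = (dist r (s i₁) + dist (s i₀) r - dist (s i₀) (s i₁)) / 2 := by
    rw [alpha, dist_comm r (s i₀), dist_comm (s i₁) (s i₀)]
  rw [hα] at hmax
  rw [teiaPhi_eq, teiaPhi_eq, hpair, hcost, hcost', hE, dist_comm (s i₁) r]
  linarith

end Teia

/-- Update condition for a lazy request served by a matched server: the request
is `r = a_1`, server `2` (which satisfies the HANDICAP selection inequality)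
moves to it, the matching is updated to `ŝ_1 = s_1 ↔ â_1 = s_2`,
`ŝ_2 = â_2 = a_1`, `ŝ_j = â_j = s_j` for `j ≥ 3`, and the handicaps are updated
by `Ê_j = E_j + α(a_1; s_2, s_j)`.  Then `ΔΦ + cost_alg ≤ 0`. -/
theorem teiaPhi_lazy_request_matched_server {M : Type*} [MetricSpace M] {k : ℕ}
    (hk : 2 ≤ k) (s a : Fin k → M) (E : Fin k → ℝ)
    (h : ∀ j : Fin k, j ≠ ⟨0, by omega⟩ → s j = a j)
    (hserve : E ⟨1, hk⟩ + dist (s ⟨1, hk⟩) (a ⟨0, by omega⟩)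
        ≤ E ⟨0, by omega⟩ + dist (s ⟨0, by omega⟩) (a ⟨0, by omega⟩)) :
    teiaPhi (Function.update s ⟨1, hk⟩ (a ⟨0, by omega⟩))
        (Function.update (Function.update a ⟨0, by omega⟩ (s ⟨1, hk⟩))
          ⟨1, hk⟩ (a ⟨0, by omega⟩))
        (fun j => E j + alpha (a ⟨0, by omega⟩) (s ⟨1, hk⟩) (s j))
      - teiaPhi s a E + dist (s ⟨1, hk⟩) (a ⟨0, by omega⟩) ≤ 0 :=
  teiaPhi_lazy_sub_add_dist_nonpos (by simp) h hserve
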